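/- In the basilica group action on X = {x,y}, every element of {e, a, b, a^{-1}, b^{-1}, ab^{-1}, ba^{-1}} is a restriction g|_v of itself for some nonempty word v (each vertex of the corresponding Moore diagram lies on, or is reachable from, a cycle), and this set is closed under restriction; hence it is contained in the nucleus of the basilica action. -/

import Mathlib

/-!
The restriction table of `a, b, a⁻¹, b⁻¹` sends `{e, a, b, a⁻¹, b⁻¹, ab⁻¹, ba⁻¹}` into itself, and
in this Moore diagram every state lies on a cycle: `e →ₓ e`, `a →ₓ b →ₓ a`, `a⁻¹ →ᵧ b⁻¹ →ₓ a⁻¹`,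
`ab⁻¹ →ₓ ba⁻¹ →ᵧ ab⁻¹`. Running around a cycle `k` times realises a state as its own restriction at
a word of length at least `k`, so each of these elements lies in the nucleus.
-/

mutual
/-- The generator `a` of the basilica group acting on words over `X = {x,y}` (encoded
as `Bool` with `x = false`, `y = true`): `a·(xw) = y(b·w)`, `a·(yw) = xw`. -/
def basA : List Bool → List Bool
  | [] => []
  | false :: w => true :: basB w
  | true :: w => false :: w
/-- The generator `b`: `b·(xw) = x(a·w)`, `b·(yw) = yw`. -/
def basB : List Bool → List Bool
  | [] => []
  | false :: w => false :: basA w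
  | true :: w => true :: w
end

mutual
/-- The inverse of the generator `a`: `a⁻¹·(yw) = x(b⁻¹·w)`, `a⁻¹·(xw) = yw`. -/
def basAInv : List Bool → List Bool
  | [] => []
  | true :: w => false :: basBInv w
  | false :: w => true :: w
/-- The inverse of the generator `b`: `b⁻¹·(xw) = x(a⁻¹·w)`, `b⁻¹·(yw) = yw`. -/
def basBInv : List Bool → List Bool
  | [] => []
  | false :: w => false :: basAInv w
  | true :: w => true :: w
end

/-- The restriction `f|_x` of a (length- and prefix-preserving) transformation of words:
`f|_x (w)` is the tail of `f (x :: w)`. -/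
def restr (f : List Bool → List Bool) (x : Bool) : List Bool → List Bool :=
  fun w => (f (x :: w)).tail

/-- The restriction `f|_v` of a transformation of words to a word `v`. -/
def restrW : (List Bool → List Bool) → List Bool → (List Bool → List Bool)
  | f, [] => f
  | f, x :: v => restrW (restr f x) v

/-- The candidate nucleus `{e, a, b, a⁻¹, b⁻¹, ab⁻¹, ba⁻¹}` of the basilica action. -/
def basNucSet : Set (List Bool → List Bool) :=
  {id, basA, basB, basAInv, basBInv, basA ∘ basBInv, basB ∘ basAInv}

def nucleus (S : Set (Function.End (List Bool))) : Set (List Bool → List Bool) :=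
  ⋃ g ∈ Submonoid.closure S,
    ⋂ n : ℕ, {f : List Bool → List Bool | ∃ v : List Bool, n ≤ v.length ∧ restrW g v = f}

section Restriction

variable (f : List Bool → List Bool)

@[simp]
lemma restrW_nil : restrW f [] = f := rfl

@[simp]
lemma restrW_cons (x : Bool) (v : List Bool) : restrW f (x :: v) = restrW (restr f x) v := rfl

lemma restrW_append (u w : List Bool) : restrW f (u ++ w) = restrW (restrW f u) w := by
  induction u generalizing f with
  | nil => rfl
  | cons x u ih => exact ih (restr f x)

variable {f}

lemma restrW_flatten_replicate {v : List Bool} (h : restrW f v = f) (k : ℕ) :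
    restrW f (List.replicate k v).flatten = f := by
  induction k with
  | zero => rfl
  | succ k ih => rw [List.replicate_succ, List.flatten_cons, restrW_append, h, ih]

lemma mem_nucleus_of_restrW_eq_self {S : Set (Function.End (List Bool))}
    (hf : f ∈ Submonoid.closure S) {v : List Bool} (hv : v ≠ []) (h : restrW f v = f) :
    f ∈ nucleus S := by
  refine Set.mem_iUnion₂.mpr ⟨f, hf, Set.mem_iInter.mpr fun n => ?_⟩
  refine ⟨(List.replicate n v).flatten, ?_, restrW_flatten_replicate h n⟩
  have hlen : 1 ≤ v.length := List.length_pos_iff.mpr hv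
  simpa [List.length_flatten] using Nat.le_mul_of_pos_right n hlen

end Restriction

@[simp] lemma restr_id (x : Bool) : restr id x = id := by cases x <;> rfl
@[simp] lemma restr_basA_false : restr basA false = basB := rfl
@[simp] lemma restr_basA_true : restr basA true = id := rfl
@[simp] lemma restr_basB_false : restr basB false = basA := rfl
@[simp] lemma restr_basB_true : restr basB true = id := rfl
@[simp] lemma restr_basAInv_false : restr basAInv false = id := rfl
@[simp] lemma restr_basAInv_true : restr basAInv true = basBInv := rfl
@[simp] lemma restr_basBInv_false : restr basBInv false = basAInv := rfl
@[simp] lemma restr_basBInv_true : restr basBInv true = id := rfl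
@[simp] lemma restr_basA_comp_basBInv_false : restr (basA ∘ basBInv) false = basB ∘ basAInv := rfl
@[simp] lemma restr_basA_comp_basBInv_true : restr (basA ∘ basBInv) true = id := rfl
@[simp] lemma restr_basB_comp_basAInv_false : restr (basB ∘ basAInv) false = id := rfl
@[simp] lemma restr_basB_comp_basAInv_true : restr (basB ∘ basAInv) true = basA ∘ basBInv := rfl

lemma restr_mem_basNucSet {f : List Bool → List Bool} (hf : f ∈ basNucSet) (x : Bool) :
    restr f x ∈ basNucSet := by
  simp only [basNucSet, Set.mem_insert_iff, Set.mem_singleton_iff] at hf ⊢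
  rcases hf with rfl | rfl | rfl | rfl | rfl | rfl | rfl <;> cases x <;> simp

lemma exists_restrW_eq_self_of_mem_basNucSet {f : List Bool → List Bool} (hf : f ∈ basNucSet) :
    ∃ v : List Bool, v ≠ [] ∧ restrW f v = f := by
  simp only [basNucSet, Set.mem_insert_iff, Set.mem_singleton_iff] at hf
  rcases hf with rfl | rfl | rfl | rfl | rfl | rfl | rfl
  · exact ⟨[false], by simp, by simp⟩
  · exact ⟨[false, false], by simp, by simp⟩
  · exact ⟨[false, false], by simp, by simp⟩
  · exact ⟨[true, false], by simp, by simp⟩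
  · exact ⟨[false, true], by simp, by simp⟩
  · exact ⟨[false, true], by simp, by simp⟩
  · exact ⟨[true, false], by simp, by simp⟩

lemma mem_closure_of_mem_basNucSet {f : List Bool → List Bool} (hf : f ∈ basNucSet) :
    f ∈ Submonoid.closure ({basA, basB, basAInv, basBInv} : Set (Function.End (List Bool))) := by
  set S : Set (Function.End (List Bool)) := {basA, basB, basAInv, basBInv}
  have ha : basA ∈ Submonoid.closure S := Submonoid.subset_closure (Or.inl rfl)
  have hb : basB ∈ Submonoid.closure S := Submonoid.subset_closure (Or.inr (Or.inl rfl))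
  have hai : basAInv ∈ Submonoid.closure S :=
    Submonoid.subset_closure (Or.inr (Or.inr (Or.inl rfl)))
  have hbi : basBInv ∈ Submonoid.closure S :=
    Submonoid.subset_closure (Or.inr (Or.inr (Or.inr rfl)))
  simp only [basNucSet, Set.mem_insert_iff, Set.mem_singleton_iff] at hf
  rcases hf with rfl | rfl | rfl | rfl | rfl | rfl | rfl
  · exact one_mem _
  · exact ha
  · exact hb
  · exact hai
  · exact hbi
  · exact mul_mem ha hbi
  · exact mul_mem hb hai

/-- In the basilica action, every element of `{e, a, b, a⁻¹, b⁻¹, ab⁻¹, ba⁻¹}` is a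
restriction `g|_v` of itself for some nonempty word `v` (each vertex of the Moore
diagram lies on a cycle), the set is closed under restriction, and hence it is
contained in the nucleus of the basilica action. -/
theorem basilica_nucleus_containment :
    (∀ f ∈ basNucSet, ∃ v : List Bool, v ≠ [] ∧ restrW f v = f) ∧
    (∀ f ∈ basNucSet, ∀ x : Bool, restr f x ∈ basNucSet) ∧
    basNucSet ⊆
      ⋃ g ∈ Submonoid.closure
        ({basA, basB, basAInv, basBInv} : Set (Function.End (List Bool))),
        ⋂ n : ℕ, {f : List Bool → List Bool |
          ∃ v : List Bool, n ≤ v.length ∧ restrW g v = f} := by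
  refine ⟨fun f hf => exists_restrW_eq_self_of_mem_basNucSet hf,
    fun f hf => restr_mem_basNucSet hf, fun f hf => ?_⟩
  obtain ⟨v, hv, hcycle⟩ := exists_restrW_eq_self_of_mem_basNucSet hf
  exact mem_nucleus_of_restrW_eq_self (mem_closure_of_mem_basNucSet hf) hv hcycle
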